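/- arXiv:0910.4785 — 4 statements merged into one kernel-verified Lean document; each statement's English description precedes it below -/
import Mathlib

section
/- Let v : [0,∞) → ℝ be differentiable and satisfy the ODE √(g¹¹)(1−v²)v' + (1−v²)F₋(r,v) + θ₋(r) = 0 on (0,∞), where θ₋(r) > 0 for all r > 0 and F₋ is continuous. If |v(0)| < 1, then −1 < v(r) < 1 for all r ≥ 0. -/
/-! At a radius `r > 0` where `|v r| = 1` the factor `1 - v²` vanishes and the equation collapses
to `θ₋(r) = 0`, which is impossible. Hence `|v|` never takes the value `1` on `(0, ∞)`, and since
it starts below `1` it stays below `1` by the intermediate value theorem. -/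

open Set

theorem IsPreconnected.forall_lt_of_forall_ne {α : Type*} [TopologicalSpace α] {s : Set α}
    {f : α → ℝ} {a : α} {c : ℝ} (hs : IsPreconnected s) (hf : ContinuousOn f s) (ha : a ∈ s)
    (hfa : f a < c) (hne : ∀ x ∈ s, f x ≠ c) : ∀ x ∈ s, f x < c := by
  intro x hx
  by_contra! hcx
  obtain ⟨y, hy, hfy⟩ := hs.intermediate_value ha hx hf ⟨hfa.le, hcx⟩
  exact hne y hy hfy

theorem jang_a_priori_bound_general
    (g11inv θm : ℝ → ℝ) (F : ℝ → ℝ → ℝ) (v : ℝ → ℝ)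
    (hθpos : ∀ r > (0 : ℝ), 0 < θm r)
    (hv : Differentiable ℝ v)
    (hode : ∀ r > (0 : ℝ),
      Real.sqrt (g11inv r) * (1 - v r ^ 2) * deriv v r
        + (1 - v r ^ 2) * F r (v r) + θm r = 0)
    (h0 : |v 0| < 1) :
    ∀ r ≥ (0 : ℝ), -1 < v r ∧ v r < 1 := by
  have hbarrier : ∀ r ∈ Ici (0 : ℝ), |v r| ≠ 1 := by
    rintro r hr hvr
    rcases (mem_Ici.mp hr).eq_or_lt with rfl | hr
    · exact h0.ne hvr
    have hdeg : 1 - v r ^ 2 = 0 := by rw [← sq_abs, hvr]; norm_num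
    have hθ := hode r hr
    rw [hdeg] at hθ
    exact (hθpos r hr).ne' (by simpa using hθ)
  intro r hr
  exact abs_lt.mp <| isPreconnected_Ici.forall_lt_of_forall_ne hv.continuous.abs.continuousOn
    self_mem_Ici h0 hbarrier r hr

/-- A priori bound −1 < v < 1 for solutions of the spherically symmetric
generalized Jang equation `√(g¹¹)(1−v²)v' + (1−v²)F₋(r,v) + θ₋(r) = 0` with `θ₋ > 0`
on `(0,∞)` and `|v(0)| < 1`. -/
theorem jang_a_priori_bound
    (g11inv θm : ℝ → ℝ) (F : ℝ → ℝ → ℝ) (v : ℝ → ℝ)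
    (hgcont : Continuous g11inv) (hgpos : ∀ r, 0 < g11inv r)
    (hθcont : ContinuousOn θm (Set.Ioi (0 : ℝ)))
    (hθpos : ∀ r > (0 : ℝ), 0 < θm r)
    (hFcont : Continuous (Function.uncurry F))
    (hv : Differentiable ℝ v)
    (hode : ∀ r > (0 : ℝ),
      Real.sqrt (g11inv r) * (1 - v r ^ 2) * deriv v r
        + (1 - v r ^ 2) * F r (v r) + θm r = 0)
    (h0 : |v 0| < 1) :
    ∀ r ≥ (0 : ℝ), -1 < v r ∧ v r < 1 :=
  jang_a_priori_bound_general g11inv θm F v hθpos hv hode h0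
end

section
/- Let ρ, m be as in the spherically symmetric Hawking mass setup with m(s) = ½ρ(s)(1 − ρ_s(s)²), ρ_s(0) = 0 (so that S₀ is a minimal surface), and suppose the scalar curvature R̄ of ḡ = ds² + ρ² dΩ² satisfies R̄ ≥ 0 and ρ_s ≥ 0 on (0,∞). If m(s) → M as s → ∞, then M ≥ ρ(0)/2 = √(A/(16π)), where A = 4πρ(0)² is the area of the sphere s = 0. -/
open Filter Set Topology

/-!
The Hawking mass of the metric `ds² + ρ² dΩ²` satisfies `m_s = ¼ρ_sρ²R̄`, so it is nondecreasing
where `R̄ ≥ 0` and `ρ_s ≥ 0`. Its limit `M` therefore dominates `m(0)`, which equals `ρ(0)/2` on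
the minimal surface `ρ_s(0) = 0`.
-/

/- `ρs` and `ρss` play the roles of `ρ_s` and `ρ_ss`; they are tied to `ρ` only by the
`HasDerivAt` hypotheses of the lemmas below. -/
noncomputable def hawkingMass (ρ ρs : ℝ → ℝ) (s : ℝ) : ℝ :=
  1 / 2 * ρ s * (1 - ρs s ^ 2)

noncomputable def sphericalScalarCurvature (ρ ρs ρss : ℝ → ℝ) (s : ℝ) : ℝ :=
  2 * (ρ s ^ 2)⁻¹ * (1 - 2 * ρ s * ρss s - ρs s ^ 2)

section HawkingMass

variable {ρ ρs ρss : ℝ → ℝ} {s a : ℝ}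

theorem hawkingMass_of_deriv_eq_zero (h : ρs s = 0) : hawkingMass ρ ρs s = ρ s / 2 := by
  rw [hawkingMass, h]
  ring

theorem hasDerivAt_hawkingMass (hρ : ρ s ≠ 0) (h₁ : HasDerivAt ρ (ρs s) s)
    (h₂ : HasDerivAt ρs (ρss s) s) :
    HasDerivAt (hawkingMass ρ ρs) (ρs s * ρ s ^ 2 * sphericalScalarCurvature ρ ρs ρss s / 4) s := by
  have h : HasDerivAt (hawkingMass ρ ρs)
      (1 / 2 * ρs s * (1 - ρs s ^ 2) + 1 / 2 * ρ s * -(2 * ρs s ^ 1 * ρss s)) s :=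
    (h₁.const_mul (1 / 2)).mul ((h₂.pow 2).const_sub 1)
  convert h using 1
  rw [sphericalScalarCurvature]
  field_simp
  ring

theorem hawkingMass_monotoneOn (hρ : ∀ s > a, 0 < ρ s) (h₁ : ∀ s, HasDerivAt ρ (ρs s) s)
    (h₂ : ∀ s, HasDerivAt ρs (ρss s) s)
    (hR : ∀ s > a, 0 ≤ sphericalScalarCurvature ρ ρs ρss s) (hρs : ∀ s > a, 0 ≤ ρs s) :
    MonotoneOn (hawkingMass ρ ρs) (Ici a) := by
  have hcont : Continuous (hawkingMass ρ ρs) := by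
    have hρc : Continuous ρ := continuous_iff_continuousAt.2 fun s ↦ (h₁ s).continuousAt
    have hρsc : Continuous ρs := continuous_iff_continuousAt.2 fun s ↦ (h₂ s).continuousAt
    unfold hawkingMass
    fun_prop
  refine monotoneOn_of_hasDerivWithinAt_nonneg (convex_Ici a) hcont.continuousOn
    (f' := fun s ↦ ρs s * ρ s ^ 2 * sphericalScalarCurvature ρ ρs ρss s / 4)
    (fun s hs ↦ ?_) (fun s hs ↦ ?_)
  all_goals rw [interior_Ici] at hs
  · exact (hasDerivAt_hawkingMass (hρ s hs).ne' (h₁ s) (h₂ s)).hasDerivWithinAt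
  · have := hρs s hs
    have := hR s hs
    positivity

end HawkingMass

theorem MonotoneOn.le_of_tendsto_atTop {α β : Type*} [Preorder α] [IsDirectedOrder α]
    [TopologicalSpace β] [Preorder β] [OrderClosedTopology β] {f : α → β} {a : α} {M : β}
    (hf : MonotoneOn f (Ici a)) (hM : Tendsto f atTop (𝓝 M)) : f a ≤ M :=
  haveI : Nonempty α := ⟨a⟩
  ge_of_tendsto hM <| (eventually_ge_atTop a).mono fun _ hs ↦ hf self_mem_Ici hs hs

theorem half_eq_sqrt_sphere_area_div {r : ℝ} (hr : 0 ≤ r) :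
    r / 2 = Real.sqrt (4 * Real.pi * r ^ 2 / (16 * Real.pi)) := by
  have harea : 4 * Real.pi * r ^ 2 / (16 * Real.pi) = (r / 2) ^ 2 := by
    field_simp [Real.pi_ne_zero]
    ring
  rw [harea, Real.sqrt_sq (by positivity)]

/-- Monotonicity of the Hawking mass in spherical symmetry with `R̄ ≥ 0`,
`ρ_s ≥ 0`, and a minimal surface at `s = 0` (`ρ_s(0) = 0`) gives the Penrose inequality
`M ≥ ρ(0)/2 = √(A/16π)` with `A = 4πρ(0)²`. -/
theorem spherically_symmetric_penrose_time_symmetric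
    (ρ ρs ρss R m : ℝ → ℝ) (M : ℝ)
    (hρpos : ∀ s, 0 < ρ s)
    (hd1 : ∀ s, HasDerivAt ρ (ρs s) s)
    (hd2 : ∀ s, HasDerivAt ρs (ρss s) s)
    (hm : ∀ s, m s = (1 / 2) * ρ s * (1 - (ρs s) ^ 2))
    (hR : ∀ s, R s = 2 * ((ρ s) ^ 2)⁻¹ * (1 - 2 * ρ s * ρss s - (ρs s) ^ 2))
    (hRnonneg : ∀ s > (0 : ℝ), 0 ≤ R s)
    (hρsnonneg : ∀ s > (0 : ℝ), 0 ≤ ρs s)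
    (hmin : ρs 0 = 0)
    (hlim : Tendsto m atTop (nhds M)) :
    M ≥ ρ 0 / 2 ∧
      ρ 0 / 2 = Real.sqrt ((4 * Real.pi * (ρ 0) ^ 2) / (16 * Real.pi)) := by
  have hm' : m = hawkingMass ρ ρs := funext hm
  have hR' : R = sphericalScalarCurvature ρ ρs ρss := funext hR
  have hmono : MonotoneOn m (Ici 0) :=
    hm' ▸ hawkingMass_monotoneOn (fun s _ ↦ hρpos s) hd1 hd2 (hR' ▸ hRnonneg) hρsnonneg
  refine ⟨?_, half_eq_sqrt_sphere_area_div (hρpos 0).le⟩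
  rw [← hawkingMass_of_deriv_eq_zero hmin, ← hm']
  exact hmono.le_of_tendsto_atTop hlim
end

section
/- In the spherically symmetric setting, with K the extension of k defined by K(∂_i,∂_j) = k_ij for 1 ≤ i,j ≤ 3, K(∂_i,∂_t) = 0, and k₄₄ = g¹¹φφ_r f_r / √(φ⁻² + g¹¹ f_r²), the trace of K over the graph Σ = {t=f(r)} with induced metric ḡ = g + φ²df² equals Tr_Σ K = (1−v²)k_a + 2k_b + √(g¹¹)(φ_r/φ)v³, where v = φ√(g¹¹)f_r/√(1+φ²g¹¹f_r²). -/
/-!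
Put `x = φ √(g¹¹) f_r`, so that `v = x / √(1 + x²)` and `1 - v² = (1 + x²)⁻¹`. Since
`φ⁻² + g¹¹ f_r² = φ⁻² (1 + x²)`, the radial component of the inverse induced metric is
`ḡ^{rr} = g¹¹ (1 - v²)`, which turns the `k_a` term into `(1 - v²) k_a`; the same factor
`1 - v² = φ⁻² / (φ⁻² + g¹¹ f_r²)` turns the `k₄₄` term into `√(g¹¹) (φ_r / φ) v³`.
-/

open Real

lemma one_sub_sq_div_sqrt_one_add_sq (x : ℝ) : 1 - (x / √(1 + x ^ 2)) ^ 2 = (1 + x ^ 2)⁻¹ := by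
  have hpos : 0 < 1 + x ^ 2 := by positivity
  rw [div_pow, sq_sqrt hpos.le]
  field_simp
  ring

lemma inv_sq_add_eq_div {φ : ℝ} (hφ : φ ≠ 0) (s : ℝ) :
    (φ ^ 2)⁻¹ + s = (1 + φ ^ 2 * s) / φ ^ 2 := by
  field_simp

lemma sqrt_inv_sq_add {φ : ℝ} (hφ : 0 < φ) (s : ℝ) :
    √((φ ^ 2)⁻¹ + s) = √(1 + φ ^ 2 * s) / φ := by
  rw [inv_sq_add_eq_div hφ.ne', sqrt_div' _ (sq_nonneg φ), sqrt_sq hφ.le]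

lemma sub_sq_div_inv_sq_add {φ : ℝ} (hφ : φ ≠ 0) {a f : ℝ} (h : 1 + φ ^ 2 * a * f ^ 2 ≠ 0) :
    a - (a * f) ^ 2 / ((φ ^ 2)⁻¹ + a * f ^ 2) = a / (1 + φ ^ 2 * a * f ^ 2) := by
  rw [inv_sq_add_eq_div hφ, ← mul_assoc, div_div_eq_mul_div, eq_div_iff h, sub_mul, div_mul_cancel₀ _ h]
  ring

lemma div_one_add_sq_mul_div_sqrt_eq_cube {a φ : ℝ} (ha : 0 ≤ a) (hφ : φ ≠ 0) (φr f : ℝ) :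
    a / (1 + (φ * √a * f) ^ 2) * f ^ 2 * (a * φ ^ 2 * φr * f / √(1 + (φ * √a * f) ^ 2))
      = √a * (φr / φ) * (φ * √a * f / √(1 + (φ * √a * f) ^ 2)) ^ 3 := by
  set x := φ * √a * f with hxdef
  have hW : 0 < 1 + x ^ 2 := by positivity
  have hsqrt_a : √a ^ 2 = a := sq_sqrt ha
  have hx3 : x ^ 3 * √a = φ ^ 3 * a ^ 2 * f ^ 3 := by
    rw [hxdef]
    linear_combination φ ^ 3 * f ^ 3 * (√a ^ 2 + a) * hsqrt_a
  field_simp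
  rw [sq_sqrt hW.le]
  linear_combination (-(1 + x ^ 2) * φr) * hx3

theorem trace_extended_tensor_spherical_general
    (g11 φ φr fr ka kb : ℝ)
    (hg : 0 < g11) (hφ : 0 < φ) :
    let ginv : ℝ := 1 / g11
    let gradsq : ℝ := ginv * fr ^ 2
    let fup : ℝ := ginv * fr
    let gbarrr : ℝ := ginv - fup ^ 2 / ((φ ^ 2)⁻¹ + gradsq)
    let k44 : ℝ := ginv * φ * φr * fr / Real.sqrt ((φ ^ 2)⁻¹ + gradsq)
    let v : ℝ := φ * Real.sqrt ginv * fr / Real.sqrt (1 + φ ^ 2 * ginv * fr ^ 2)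
    gbarrr * (g11 * ka) + 2 * kb + gbarrr * fr ^ 2 * k44
      = (1 - v ^ 2) * ka + 2 * kb + Real.sqrt ginv * (φr / φ) * v ^ 3 := by
  intro ginv gradsq fup gbarrr k44 v
  have hginv : 0 < ginv := by positivity
  have hx : φ ^ 2 * ginv * fr ^ 2 = (φ * √ginv * fr) ^ 2 := by
    rw [mul_pow, mul_pow, sq_sqrt hginv.le]
  have hgbar : gbarrr = ginv / (1 + (φ * √ginv * fr) ^ 2) := by
    rw [← hx]
    exact sub_sq_div_inv_sq_add hφ.ne' (by positivity)
  have hk44 : k44 = ginv * φ ^ 2 * φr * fr / √(1 + (φ * √ginv * fr) ^ 2) := by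
    simp only [k44, gradsq, sqrt_inv_sq_add hφ, ← mul_assoc, hx]
    field_simp
  have hv : v = φ * √ginv * fr / √(1 + (φ * √ginv * fr) ^ 2) := by simp only [v, hx]
  have hka : gbarrr * (g11 * ka) = (1 - v ^ 2) * ka := by
    rw [hv, one_sub_sq_div_sqrt_one_add_sq, hgbar]
    field_simp
    rw [one_div_mul_cancel hg.ne', one_mul]
  rw [hka, hgbar, hk44, hv, div_one_add_sq_mul_div_sqrt_eq_cube hginv.le hφ.ne']

/-- In spherical symmetry, with the extension `K` of `k` given by
`K(∂_i,∂_j) = k_ij`, `K(∂_i,∂_t) = 0` and `k₄₄ = g¹¹φφ_r f_r/√(φ⁻² + g¹¹f_r²)`,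
the trace of `K` over the graph `Σ = {t = f(r)}` with induced metric `ḡ = g + φ²df²`,
namely `Tr_Σ K = ḡ^{ij}k_ij + ḡ^{ij}f_if_j k₄₄`, equals
`(1−v²)k_a + 2k_b + √(g¹¹)(φ_r/φ)v³`, where `v = φ√(g¹¹)f_r/√(1+φ²g¹¹f_r²)`. -/
theorem trace_extended_tensor_spherical
    (g11 ρ φ φr fr ka kb : ℝ)
    (hg : 0 < g11) (hρ : 0 < ρ) (hφ : 0 < φ) :
    let ginv : ℝ := 1 / g11
    let gradsq : ℝ := ginv * fr ^ 2
    let fup : ℝ := ginv * fr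
    let gbarrr : ℝ := ginv - fup ^ 2 / ((φ ^ 2)⁻¹ + gradsq)
    let k44 : ℝ := ginv * φ * φr * fr / Real.sqrt ((φ ^ 2)⁻¹ + gradsq)
    let v : ℝ := φ * Real.sqrt ginv * fr / Real.sqrt (1 + φ ^ 2 * ginv * fr ^ 2)
    gbarrr * (g11 * ka) + 2 * kb + gbarrr * fr ^ 2 * k44
      = (1 - v ^ 2) * ka + 2 * kb + Real.sqrt ginv * (φr / φ) * v ^ 3 :=
  trace_extended_tensor_spherical_general g11 φ φr fr ka kb hg hφ
end

section
/- In the spherically symmetric setting with φ = ρ_s and v the solution of the generalized Jang equation, the radial component of the 1-form q satisfies q₁ = −2√(g₁₁)·(v/(1−v²))·(√(g¹¹)(ρ_r/ρ)v − k_b), and hence the boundary integrand is φ ḡ(q, n_ḡ) dσ_ḡ = ±(2ρ_r v/√(g₁₁))·(√(g¹¹)(ρ_r/ρ)v − k_b)·ρ² dσ. -/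
/-!
Inverting the slope relation `v = u / √(1 + u²)`, `u = φ √g¹¹ f_r`, gives
`f_r = v √g₁₁ / (φ √(1 - v²))`, so every radical in `q₁` and in `ḡ` becomes a rational expression
in `√g₁₁` and `√(1 - v²)`. The logarithmic derivative of this formula for `f_r` turns the
covariant Hessian term into `√g₁₁ (v_r / (1 - v²) + v φ_r / φ) / (φ √(1 - v²))`; the Jang equation
then eliminates `v_r` together with the `k_a` and `φ_r` terms, leaving only the `k_b` term. On the
boundary, `ḡ₁₁ = g₁₁ / (1 - v²)` and `φ = √(1 - v²) ρ_r / √g₁₁` cancel all the factors of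
`1 - v²`.
-/

open Real

lemma one_sub_sq_pos {v : ℝ} (hv : |v| < 1) : 0 < 1 - v ^ 2 :=
  sub_pos.2 ((sq_lt_one_iff_abs_lt_one v).2 hv)

lemma eq_div_sqrt_one_sub_sq_of_eq_div_sqrt_one_add_sq {u v : ℝ} (h : v = u / √(1 + u ^ 2)) :
    u = v / √(1 - v ^ 2) := by
  have hpos : 0 < 1 + u ^ 2 := by positivity
  have h1v : 1 - v ^ 2 = (√(1 + u ^ 2))⁻¹ ^ 2 := by
    rw [h, div_pow, inv_pow, sq_sqrt hpos.le]
    field_simp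
    ring
  rw [h1v, sqrt_sq (by positivity), h, div_inv_eq_mul, div_mul_cancel₀ _ (sqrt_pos.2 hpos).ne']

lemma jang_gradient_eq_of_slope {g φ v f' : ℝ} (hg : 0 < g) (hφ : φ ≠ 0)
    (hv : v = φ * √(1 / g) * f' / √(1 + φ ^ 2 * (1 / g) * f' ^ 2)) :
    f' = v * √g / (φ * √(1 - v ^ 2)) := by
  rw [show φ ^ 2 * (1 / g) * f' ^ 2 = (φ * √(1 / g) * f') ^ 2 by
    rw [mul_pow, mul_pow, sq_sqrt (by positivity)]] at hv
  rw [show v * √g / (φ * √(1 - v ^ 2)) = v / √(1 - v ^ 2) * √g / φ by ring,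
    ← eq_div_sqrt_one_sub_sq_of_eq_div_sqrt_one_add_sq hv, one_div, sqrt_inv]
  field_simp [(sqrt_pos.2 hg).ne']

-- The first summand is `f_{;rr} + 2 (log φ)_r f_r`.
lemma hasDerivAt_jang_gradient {v g φ : ℝ → ℝ} {v' g' φ' r : ℝ}
    (hv : HasDerivAt v v' r) (hg : HasDerivAt g g' r) (hφ : HasDerivAt φ φ' r)
    (hg0 : 0 < g r) (hφ0 : φ r ≠ 0) (hv1 : |v r| < 1) :
    HasDerivAt (fun t => v t * √(g t) / (φ t * √(1 - v t ^ 2)))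
      (√(g r) / (φ r * √(1 - v r ^ 2)) * (v' / (1 - v r ^ 2) + v r * (φ' / φ r))
        + (g' / (2 * g r) - 2 * (φ' / φ r)) * (v r * √(g r) / (φ r * √(1 - v r ^ 2)))) r := by
  have hs : 0 < 1 - v r ^ 2 := one_sub_sq_pos hv1
  have hS : 0 < √(1 - v r ^ 2) := sqrt_pos.2 hs
  have hW : 0 < √(g r) := sqrt_pos.2 hg0
  have h := (hv.fun_mul (hg.sqrt hg0.ne')).fun_div
    (hφ.fun_mul (((hasDerivAt_const r 1).fun_sub (hv.fun_pow 2)).sqrt hs.ne'))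
    (mul_ne_zero hφ0 hS.ne')
  refine h.congr_deriv ?_
  set W := √(g r)
  set S := √(1 - v r ^ 2)
  have hW2 : W ^ 2 = g r := sq_sqrt hg0.le
  have hS2 : S ^ 2 = 1 - v r ^ 2 := sq_sqrt hs.le
  rw [← hW2, ← hS2]
  field_simp
  push_cast
  linear_combination 2 * v' * W ^ 2 * φ r * hS2

lemma jang_radial_q_eq {g φ v v' φ' g' ka A f' f'' : ℝ} (hg : 0 < g) (hφ : 0 < φ) (hv : |v| < 1)
    (hf' : f' = v * √g / (φ * √(1 - v ^ 2)))
    (hf'' : f'' = √g / (φ * √(1 - v ^ 2)) * (v' / (1 - v ^ 2) + v * (φ' / φ))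
      + (g' / (2 * g) - 2 * (φ' / φ)) * f')
    (hjang : √(1 / g) * v' + 2 * A + (v ^ 2 - 1) * ka
      + √(1 / g) * v * (φ' / φ) * (1 - v ^ 2) = 0) :
    φ * (1 / g) * f' / √(1 + φ ^ 2 * (1 / g) * f' ^ 2) *
        ((f'' - 1 / 2 * (1 / g) * g' * f' + 2 * (φ' / φ) * f') /
          √((φ ^ 2)⁻¹ + 1 / g * f' ^ 2) - g * ka)
      = -2 * √g * (v / (1 - v ^ 2)) * A := by
  have hs : 0 < 1 - v ^ 2 := one_sub_sq_pos hv
  have hcov : f'' - 1 / 2 * (1 / g) * g' * f' + 2 * (φ' / φ) * f'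
      = √g / (φ * √(1 - v ^ 2)) * (v' / (1 - v ^ 2) + v * (φ' / φ)) := by
    rw [hf'']; field_simp; ring
  set W := √g with hWdef
  set S := √(1 - v ^ 2)
  have hW : 0 < W := sqrt_pos.2 hg
  have hS : 0 < S := sqrt_pos.2 hs
  have hW2 : W ^ 2 = g := sq_sqrt hg.le
  have hS2 : S ^ 2 = 1 - v ^ 2 := sq_sqrt hs.le
  have hT : √(1 + φ ^ 2 * (1 / g) * f' ^ 2) = S⁻¹ := by
    rw [sqrt_eq_iff_mul_self_eq_of_pos (by positivity), hf', ← hW2]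
    field_simp
    linear_combination -hS2
  have hN : √((φ ^ 2)⁻¹ + 1 / g * f' ^ 2) = (φ * S)⁻¹ := by
    rw [sqrt_eq_iff_mul_self_eq_of_pos (by positivity), hf', ← hW2]
    field_simp
    linear_combination -hS2
  have hv' : v' = W * ((1 - v ^ 2) * ka - 2 * A) - v * (φ' / φ) * (1 - v ^ 2) := by
    rw [one_div, sqrt_inv, ← hWdef] at hjang
    field_simp at hjang ⊢
    linear_combination hjang
  rw [hcov, hT, hN, hf', hv', ← hW2, ← hS2]
  field_simp
  ring

lemma jang_boundary_integrand_eq {g φ v f' ρ' q A : ℝ} (hg : 0 < g) (hv : |v| < 1)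
    (hφ : φ = √(1 - v ^ 2) / √g * ρ') (hφ0 : φ ≠ 0)
    (hf' : f' = v * √g / (φ * √(1 - v ^ 2))) (hq : q = -2 * √g * (v / (1 - v ^ 2)) * A) :
    φ * ((g + φ ^ 2 * f' ^ 2)⁻¹ * q) * √(g + φ ^ 2 * f' ^ 2) = -(2 * ρ' * v / √g) * A := by
  have hs : 0 < 1 - v ^ 2 := one_sub_sq_pos hv
  set W := √g
  set S := √(1 - v ^ 2)
  have hW : 0 < W := sqrt_pos.2 hg
  have hS : 0 < S := sqrt_pos.2 hs
  have hW2 : W ^ 2 = g := sq_sqrt hg.le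
  have hS2 : S ^ 2 = 1 - v ^ 2 := sq_sqrt hs.le
  have hX : g + φ ^ 2 * f' ^ 2 = (W / S) ^ 2 := by
    rw [hf', ← hW2]
    field_simp
    linear_combination hS2
  rw [hX, sqrt_sq (by positivity), hq, hφ, ← hS2]
  field_simp

theorem jang_boundary_integrand_general
    (g11 ρ v ka kb φ f q1fn : ℝ → ℝ) (r : ℝ)
    (hg : ∀ t, 0 < g11 t) (hρr : ∀ t, 0 < deriv ρ t)
    (hv : ∀ t, |v t| < 1)
    (hdg : Differentiable ℝ g11)
    (hdρ2 : Differentiable ℝ (deriv ρ)) (hdv : Differentiable ℝ v)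
    (hφdef : ∀ t, φ t = Real.sqrt (1 - v t ^ 2) / Real.sqrt (g11 t) * deriv ρ t)
    -- v is the Jang slope of the graph t = f(r)
    (hvdef : ∀ t, v t = φ t * Real.sqrt (1 / g11 t) * deriv f t /
      Real.sqrt (1 + φ t ^ 2 * (1 / g11 t) * (deriv f t) ^ 2))
    -- the generalized Jang equation (3.2)
    (hode : ∀ t, Real.sqrt (1 / g11 t) * deriv v t
        + 2 * (Real.sqrt (1 / g11 t) * (deriv ρ t / ρ t) * v t - kb t)
        + (v t ^ 2 - 1) * ka t
        + Real.sqrt (1 / g11 t) * v t * (deriv φ t / φ t) * (1 - v t ^ 2) = 0)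
    -- definition of the radial component of q  (with k_rr = g₁₁k_a and
    -- f_{;rr} = f_rr − ½g¹¹g₁₁,_r f_r)
    (hq1 : ∀ t, q1fn t =
      (φ t * (1 / g11 t) * deriv f t /
          Real.sqrt (1 + φ t ^ 2 * (1 / g11 t) * (deriv f t) ^ 2)) *
        ((deriv (deriv f) t - (1 / 2) * (1 / g11 t) * deriv g11 t * deriv f t
            + 2 * (deriv φ t / φ t) * deriv f t) /
            Real.sqrt ((φ t ^ 2)⁻¹ + (1 / g11 t) * (deriv f t) ^ 2)
          - g11 t * ka t)) :
    q1fn r = -2 * Real.sqrt (g11 r) * (v r / (1 - v r ^ 2)) *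
        (Real.sqrt (1 / g11 r) * (deriv ρ r / ρ r) * v r - kb r) ∧
      (φ r * ((g11 r + φ r ^ 2 * (deriv f r) ^ 2)⁻¹ * q1fn r) *
          Real.sqrt (g11 r + φ r ^ 2 * (deriv f r) ^ 2) * ρ r ^ 2
        = -(2 * deriv ρ r * v r / Real.sqrt (g11 r)) *
            (Real.sqrt (1 / g11 r) * (deriv ρ r / ρ r) * v r - kb r) * ρ r ^ 2
      ∨ φ r * ((g11 r + φ r ^ 2 * (deriv f r) ^ 2)⁻¹ * q1fn r) *
          Real.sqrt (g11 r + φ r ^ 2 * (deriv f r) ^ 2) * ρ r ^ 2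
        = (2 * deriv ρ r * v r / Real.sqrt (g11 r)) *
            (Real.sqrt (1 / g11 r) * (deriv ρ r / ρ r) * v r - kb r) * ρ r ^ 2) := by
  have hφ (t : ℝ) : 0 < φ t := by
    rw [hφdef t]
    exact mul_pos (div_pos (sqrt_pos.2 (one_sub_sq_pos (hv t))) (sqrt_pos.2 (hg t))) (hρr t)
  have hfr (t : ℝ) : deriv f t = v t * √(g11 t) / (φ t * √(1 - v t ^ 2)) :=
    jang_gradient_eq_of_slope (hg t) (hφ t).ne' (hvdef t)
  have hdφ : HasDerivAt φ (deriv φ r) r := by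
    refine DifferentiableAt.hasDerivAt ?_
    rw [funext hφdef]
    have := (one_sub_sq_pos (hv r)).ne'
    have := (hg r).ne'
    have := (sqrt_pos.2 (hg r)).ne'
    fun_prop (disch := assumption)
  have hf'' := (hasDerivAt_jang_gradient (hdv r).hasDerivAt (hdg r).hasDerivAt hdφ (hg r)
    (hφ r).ne' (hv r)).deriv
  rw [← funext hfr, ← hfr r] at hf''
  have hq := (hq1 r).trans (jang_radial_q_eq (hg r) (hφ r) (hv r) (hfr r) hf'' (hode r))
  refine ⟨hq, Or.inl ?_⟩
  rw [jang_boundary_integrand_eq (hg r) (hv r) (hφdef r) (hφ r).ne' (hfr r) hq]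

/-- In spherical symmetry with `φ = ρ_s = √(1−v²)ρ_r/√(g₁₁)` and `v`
solving the generalized Jang equation (3.2), the radial component of the 1-form `q`,
`q₁ = (φg¹¹f_r/√(1+φ²g¹¹f_r²))((f_{;rr} + 2(logφ)_rf_r)/√(φ⁻²+|∇f|²) − k_rr)`,
equals `−2√(g₁₁)(v/(1−v²))(√(g¹¹)(ρ_r/ρ)v − k_b)`, and the boundary integrand is
`φḡ(q,n_ḡ)dσ_ḡ = ±(2ρ_rv/√(g₁₁))(√(g¹¹)(ρ_r/ρ)v − k_b)ρ²dσ`. -/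
theorem jang_boundary_integrand
    (g11 ρ v ka kb φ f q1fn : ℝ → ℝ) (r : ℝ)
    (hg : ∀ t, 0 < g11 t) (hρ : ∀ t, 0 < ρ t) (hρr : ∀ t, 0 < deriv ρ t)
    (hv : ∀ t, |v t| < 1)
    (hdg : Differentiable ℝ g11) (hdρ : Differentiable ℝ ρ)
    (hdρ2 : Differentiable ℝ (deriv ρ)) (hdv : Differentiable ℝ v)
    (hdf : Differentiable ℝ f) (hdf2 : Differentiable ℝ (deriv f))
    (hφdef : ∀ t, φ t = Real.sqrt (1 - v t ^ 2) / Real.sqrt (g11 t) * deriv ρ t)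
    -- v is the Jang slope of the graph t = f(r)
    (hvdef : ∀ t, v t = φ t * Real.sqrt (1 / g11 t) * deriv f t /
      Real.sqrt (1 + φ t ^ 2 * (1 / g11 t) * (deriv f t) ^ 2))
    -- the generalized Jang equation (3.2)
    (hode : ∀ t, Real.sqrt (1 / g11 t) * deriv v t
        + 2 * (Real.sqrt (1 / g11 t) * (deriv ρ t / ρ t) * v t - kb t)
        + (v t ^ 2 - 1) * ka t
        + Real.sqrt (1 / g11 t) * v t * (deriv φ t / φ t) * (1 - v t ^ 2) = 0)
    -- definition of the radial component of q  (with k_rr = g₁₁k_a and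
    -- f_{;rr} = f_rr − ½g¹¹g₁₁,_r f_r)
    (hq1 : ∀ t, q1fn t =
      (φ t * (1 / g11 t) * deriv f t /
          Real.sqrt (1 + φ t ^ 2 * (1 / g11 t) * (deriv f t) ^ 2)) *
        ((deriv (deriv f) t - (1 / 2) * (1 / g11 t) * deriv g11 t * deriv f t
            + 2 * (deriv φ t / φ t) * deriv f t) /
            Real.sqrt ((φ t ^ 2)⁻¹ + (1 / g11 t) * (deriv f t) ^ 2)
          - g11 t * ka t)) :
    q1fn r = -2 * Real.sqrt (g11 r) * (v r / (1 - v r ^ 2)) *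
        (Real.sqrt (1 / g11 r) * (deriv ρ r / ρ r) * v r - kb r) ∧
      (φ r * ((g11 r + φ r ^ 2 * (deriv f r) ^ 2)⁻¹ * q1fn r) *
          Real.sqrt (g11 r + φ r ^ 2 * (deriv f r) ^ 2) * ρ r ^ 2
        = -(2 * deriv ρ r * v r / Real.sqrt (g11 r)) *
            (Real.sqrt (1 / g11 r) * (deriv ρ r / ρ r) * v r - kb r) * ρ r ^ 2
      ∨ φ r * ((g11 r + φ r ^ 2 * (deriv f r) ^ 2)⁻¹ * q1fn r) *
          Real.sqrt (g11 r + φ r ^ 2 * (deriv f r) ^ 2) * ρ r ^ 2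
        = (2 * deriv ρ r * v r / Real.sqrt (g11 r)) *
            (Real.sqrt (1 / g11 r) * (deriv ρ r / ρ r) * v r - kb r) * ρ r ^ 2) :=
  jang_boundary_integrand_general g11 ρ v ka kb φ f q1fn r hg hρr hv hdg hdρ2 hdv hφdef hvdef hode
    hq1
end
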